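/- arXiv:1910.13624 — 5 statements merged into one kernel-verified Lean document; each statement's English description precedes it below -/
import Mathlib

section
/- Higman's criterion: a transitive permutation group G on Ω (with |Ω| ≥ 2) is primitive if and only if for all distinct α, β ∈ Ω, the orbital graph with vertex set Ω and edge set {α,β}^G = {{α^g, β^g} : g ∈ G} is connected. -/
/-- A permutation group `G ≤ Sym(Ω)` is transitive if it has a single orbit. -/
def IsTransitivePerm {Ω : Type*} (G : Subgroup (Equiv.Perm Ω)) : Prop :=
  ∀ a b : Ω, ∃ g ∈ G, g a = b

/-- A permutation group is primitive if it is transitive, `Ω` has more than one element,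
and the only `G`-invariant equivalence relations on `Ω` are equality and the universal
relation. -/
def IsPrimitivePerm {Ω : Type*} (G : Subgroup (Equiv.Perm Ω)) : Prop :=
  IsTransitivePerm G ∧ Nontrivial Ω ∧
    ∀ r : Setoid Ω, (∀ g ∈ G, ∀ a b : Ω, r.r a b → r.r (g a) (g b)) →
      (∀ a b : Ω, r.r a b ↔ a = b) ∨ (∀ a b : Ω, r.r a b)

/-- Higman's criterion: a transitive `G ≤ Sym(Ω)` with `|Ω| ≥ 2` is primitive if and
only if for all distinct `α, β ∈ Ω` the orbital graph with vertex set `Ω` and edge set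
`{α,β}^G` is connected (any two vertices are joined by a finite path). -/
theorem stmt4 {Ω : Type*} [Nontrivial Ω] (G : Subgroup (Equiv.Perm Ω))
    (htrans : IsTransitivePerm G) :
    IsPrimitivePerm G ↔
      ∀ α β : Ω, α ≠ β → ∀ a b : Ω,
        Relation.ReflTransGen
          (fun x y => ∃ g ∈ G, (g α = x ∧ g β = y) ∨ (g α = y ∧ g β = x)) a b := by
  constructor
  · rintro ⟨-, -, hprim⟩ α β hne a b
    set rel := fun x y : Ω => ∃ g ∈ G, (g α = x ∧ g β = y) ∨ (g α = y ∧ g β = x) with hrel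
    have hsymm : Symmetric rel := by
      rintro x y ⟨g, hg, h⟩
      exact ⟨g, hg, h.symm⟩
    let r : Setoid Ω := ⟨Relation.ReflTransGen rel,
      ⟨fun _ => .refl, fun h => (@Relation.ReflTransGen.symmetric _ rel ⟨fun _ _ h => hsymm h⟩).symm _ _ h,
        fun h1 h2 => h1.trans h2⟩⟩
    have hinv : ∀ g ∈ G, ∀ a b : Ω, r.r a b → r.r (g a) (g b) := by
      intro g hg a b h
      induction h with
      | refl => exact Relation.ReflTransGen.refl
      | tail _ hstep ih =>
        obtain ⟨k, hk, hcase⟩ := hstep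
        refine ih.tail ⟨g * k, mul_mem hg hk, ?_⟩
        rcases hcase with ⟨h1, h2⟩ | ⟨h1, h2⟩
        · exact Or.inl ⟨by simp [Equiv.Perm.mul_apply, h1],
            by simp [Equiv.Perm.mul_apply, h2]⟩
        · exact Or.inr ⟨by simp [Equiv.Perm.mul_apply, h1],
            by simp [Equiv.Perm.mul_apply, h2]⟩
    rcases hprim r hinv with heq | huniv
    · exfalso
      have : r.r α β := Relation.ReflTransGen.single ⟨1, one_mem G, Or.inl ⟨rfl, rfl⟩⟩
      exact hne ((heq α β).mp this)
    · exact huniv a b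
  · intro hconn
    refine ⟨htrans, ‹_›, ?_⟩
    intro r hinv
    by_cases h : ∀ a b : Ω, r.r a b → a = b
    · left
      exact fun a b => ⟨h a b, fun e => e ▸ r.refl a⟩
    · right
      push_neg at h
      obtain ⟨α, β, hr, hne⟩ := h
      intro x y
      have hpath := hconn α β hne x y
      induction hpath with
      | refl => exact r.refl x
      | tail _ hstep ih =>
        obtain ⟨g, hg, hcase⟩ := hstep
        have hgr : r.r (g α) (g β) := hinv g hg α β hr
        rcases hcase with ⟨h1, h2⟩ | ⟨h1, h2⟩
        · exact r.trans ih (h1 ▸ h2 ▸ hgr)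
        · exact r.trans ih (r.symm (h1 ▸ h2 ▸ hgr))
end

section
/- Let Ω be a countable set and G ≤ Sym(Ω) a closed subgroup. Define the quasi-centre QZ(G) = {g ∈ G : the pointwise stabiliser G_(Φ) is contained in C_G(g) for some finite Φ ⊆ Ω}. Then QZ(G) equals the union of all countable normal subgroups of G. -/
/-- The permutation topology (topology of pointwise convergence) on `Sym(Ω)`. -/
def permTop (Ω : Type*) : TopologicalSpace (Equiv.Perm Ω) :=
  letI : TopologicalSpace Ω := ⊥
  TopologicalSpace.induced
    (fun g : Equiv.Perm Ω => ((g : Ω → Ω), ((g⁻¹ : Equiv.Perm Ω) : Ω → Ω)))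
    instTopologicalSpaceProd

/-- The quasi-centre of `G ≤ Sym(Ω)`: the set of `g ∈ G` such that the pointwise
stabiliser `G_(Φ)` of some finite `Φ ⊆ Ω` is contained in `C_G(g)`. -/
def QZset {Ω : Type*} (G : Subgroup (Equiv.Perm Ω)) : Set (Equiv.Perm Ω) :=
  {g | g ∈ G ∧ ∃ Φ : Finset Ω, ∀ h ∈ G, (∀ x ∈ Φ, h x = x) → h * g = g * h}

open Set Topology Filter

/-- The subgroup generated by a countable set is countable. -/
theorem stmt7_countable_closure {G : Type*} [Group G] {s : Set G} (hs : s.Countable) :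
    ((Subgroup.closure s : Subgroup G) : Set G).Countable := by
  have hsi : (s ∪ s⁻¹).Countable := hs.union (by simpa using hs.image (·⁻¹))
  haveI := hsi.to_subtype
  refine Set.Countable.mono (fun x hx => ?_)
    (Set.countable_range (fun l : List ↥(s ∪ s⁻¹) => (l.map Subtype.val).prod))
  have hx' : x ∈ Submonoid.closure (s ∪ s⁻¹) := by
    rw [← Subgroup.closure_toSubmonoid]; exact hx
  obtain ⟨l, hl, rfl⟩ := Submonoid.exists_list_of_mem_closure hx'
  refine ⟨l.attach.map (fun y => (⟨y.1, hl y.1 y.2⟩ : ↥(s ∪ s⁻¹))), ?_⟩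
  simp [List.map_map, Function.comp_def]

/-- A closedness criterion in spaces mapping to a discrete space. -/
theorem stmt7_isClosed_eval {X Ω : Type*} [TopologicalSpace X] [TopologicalSpace Ω]
    [DiscreteTopology Ω] {u v : X → Ω → Ω} (hu : Continuous u) (hv : Continuous v)
    (a b : Ω) : IsClosed {x : X | u x (v x a) = b} := by
  rw [← isOpen_compl_iff]
  have h : {x : X | u x (v x a) = b}ᶜ = ⋃ y : Ω, {x | v x a = y} ∩ {x | u x y ≠ b} := by
    ext x
    simp only [mem_compl_iff, mem_setOf_eq, mem_iUnion, mem_inter_iff]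
    exact ⟨fun h => ⟨v x a, rfl, h⟩, fun ⟨y, hy, h⟩ => hy ▸ h⟩
  rw [h]
  refine isOpen_iUnion fun y => IsOpen.inter ?_ ?_
  · exact (isOpen_discrete ({y} : Set Ω)).preimage ((continuous_apply a).comp hv)
  · exact (isOpen_discrete ({b}ᶜ : Set Ω)).preimage ((continuous_apply y).comp hu)

/-- A neighbourhood of a point in a product contains a finite agreement set. -/
theorem stmt7_nhds_pi_finset {ι : Type*} {X : ι → Type*} [∀ i, TopologicalSpace (X i)]
    {f : ∀ i, X i} {s : Set (∀ i, X i)} (hs : s ∈ 𝓝 f) :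
    ∃ I : Finset ι, {g : ∀ i, X i | ∀ i ∈ I, g i = f i} ⊆ s := by
  rw [nhds_pi, Filter.mem_pi] at hs
  obtain ⟨I, hIf, t, ht, hts⟩ := hs
  refine ⟨hIf.toFinset, fun g hg => hts fun i hi => ?_⟩
  have hfi : f i ∈ t i := mem_of_mem_nhds (ht i)
  rw [hg i (hIf.mem_toFinset.mpr hi)]
  exact hfi

/-- Let `Ω` be countable and `G ≤ Sym(Ω)` a closed subgroup.  Then the quasi-centre
`QZ(G)` equals the union of all countable normal subgroups of `G`. -/
theorem stmt7 {Ω : Type*} [Countable Ω] (G : Subgroup (Equiv.Perm Ω))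
    (hG : @IsClosed _ (permTop Ω) (G : Set (Equiv.Perm Ω))) :
    QZset G = {x : Equiv.Perm Ω | ∃ N : Subgroup (Equiv.Perm Ω), N ≤ G ∧
      (∀ g ∈ G, ∀ n ∈ N, g * n * g⁻¹ ∈ N) ∧
      (N : Set (Equiv.Perm Ω)).Countable ∧ x ∈ N} := by
  classical
  letI : TopologicalSpace Ω := ⊥
  haveI : DiscreteTopology Ω := ⟨rfl⟩
  letI : TopologicalSpace (Equiv.Perm Ω) := permTop Ω
  set e : Equiv.Perm Ω → (Ω → Ω) × (Ω → Ω) :=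
    fun g => ((g : Ω → Ω), ((g⁻¹ : Equiv.Perm Ω) : Ω → Ω)) with he
  have hInd : Topology.IsInducing e := ⟨rfl⟩
  have hc1 : Continuous (fun g : Equiv.Perm Ω => (g : Ω → Ω)) :=
    continuous_fst.comp hInd.continuous
  have hc2 : Continuous (fun g : Equiv.Perm Ω => ((g⁻¹ : Equiv.Perm Ω) : Ω → Ω)) :=
    continuous_snd.comp hInd.continuous
  -- conjugation fibers are closed
  have hfib : ∀ a m : Equiv.Perm Ω, IsClosed {h : Equiv.Perm Ω | h * a * h⁻¹ = m} := by
    intro a m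
    have hrw : {h : Equiv.Perm Ω | h * a * h⁻¹ = m} =
        ⋂ z : Ω, {h : Equiv.Perm Ω | (fun w => h (a w)) ((fun w => h⁻¹ w) z) = m z} := by
      ext h
      simp only [mem_setOf_eq, mem_iInter]
      constructor
      · rintro rfl z; simp [Equiv.Perm.mul_apply]
      · intro hh; ext z; simpa [Equiv.Perm.mul_apply] using hh z
    rw [hrw]
    refine isClosed_iInter fun z => stmt7_isClosed_eval
      (u := fun h w => h (a w)) (v := fun h : Equiv.Perm Ω => ⇑h⁻¹) ?_ hc2 z (m z)
    exact continuous_pi fun w => (continuous_apply (a w)).comp hc1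
  -- the image of `G` in the product space is closed, hence Polish, hence Baire
  have hrange : IsClosed (Set.range e) := by
    have hrw : Set.range e = (⋂ x : Ω, {p : (Ω → Ω) × (Ω → Ω) | p.1 (p.2 x) = x}) ∩
        (⋂ x : Ω, {p : (Ω → Ω) × (Ω → Ω) | p.2 (p.1 x) = x}) := by
      ext p
      simp only [Set.mem_range, mem_inter_iff, mem_iInter, mem_setOf_eq]
      constructor
      · rintro ⟨g, rfl⟩
        exact ⟨fun x => g.apply_symm_apply x, fun x => g.symm_apply_apply x⟩
      · rintro ⟨h1, h2⟩
        obtain ⟨p1, p2⟩ := p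
        exact ⟨⟨p1, p2, fun x => h2 x, fun x => h1 x⟩, rfl⟩
    rw [hrw]
    exact IsClosed.inter
      (isClosed_iInter fun x => stmt7_isClosed_eval
        (u := fun p : (Ω → Ω) × (Ω → Ω) => p.1) (v := fun p => p.2)
        continuous_fst continuous_snd x x)
      (isClosed_iInter fun x => stmt7_isClosed_eval
        (u := fun p : (Ω → Ω) × (Ω → Ω) => p.2) (v := fun p => p.1)
        continuous_snd continuous_fst x x)
  have hGim : IsClosed (e '' (G : Set (Equiv.Perm Ω))) := by
    obtain ⟨C, hC, hCe⟩ := hInd.isClosed_iff.mp hG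
    have hrw : e '' (G : Set (Equiv.Perm Ω)) = Set.range e ∩ C := by
      ext p
      constructor
      · rintro ⟨g, hg, rfl⟩
        rw [← hCe] at hg
        exact ⟨⟨g, rfl⟩, hg⟩
      · rintro ⟨⟨g, rfl⟩, hpC⟩
        exact ⟨g, by rw [← hCe]; exact hpC, rfl⟩
    rw [hrw]
    exact hrange.inter hC
  have heinj : Function.Injective e := by
    intro g h hgh
    exact Equiv.coe_fn_injective (congrArg Prod.fst hgh)
  have hcomp : Topology.IsInducing (fun h : ↥(G : Set (Equiv.Perm Ω)) => e ↑h) :=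
    hInd.comp Topology.IsInducing.subtypeVal
  have hemb : Topology.IsClosedEmbedding (fun h : ↥(G : Set (Equiv.Perm Ω)) => e ↑h) := by
    refine ⟨⟨hcomp, fun a b hab => Subtype.ext (heinj hab)⟩, ?_⟩
    have hrw : Set.range (fun h : ↥(G : Set (Equiv.Perm Ω)) => e ↑h)
        = e '' (G : Set (Equiv.Perm Ω)) :=
      Set.ext fun p => ⟨fun ⟨h, hp⟩ => ⟨↑h, h.2, hp⟩, fun ⟨g, hg, hp⟩ => ⟨⟨g, hg⟩, hp⟩⟩
    rw [hrw]; exact hGim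
  haveI : PolishSpace ((Ω → Ω) × (Ω → Ω)) := by
    haveI : TopologicalSpace.SeparableSpace (Ω → Ω) := inferInstance
    haveI : TopologicalSpace.IsCompletelyMetrizableSpace (Ω → Ω) := inferInstance
    infer_instance
  haveI : PolishSpace ↥(G : Set (Equiv.Perm Ω)) := hemb.polishSpace
  haveI : BaireSpace ↥(G : Set (Equiv.Perm Ω)) := by
    letI := TopologicalSpace.upgradeIsCompletelyMetrizable ↥(G : Set (Equiv.Perm Ω))
    infer_instance
  haveI : Nonempty ↥(G : Set (Equiv.Perm Ω)) := ⟨⟨1, G.one_mem⟩⟩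
  ext x
  simp only [mem_setOf_eq]
  constructor
  · -- quasi-centre element generates a countable normal subgroup
    rintro ⟨hxG, Φ, hΦ⟩
    set S : Set (Equiv.Perm Ω) := {p | ∃ h ∈ G, h * x * h⁻¹ = p} with hS
    have key : ∀ h1 h2 : Equiv.Perm Ω, h1 ∈ G → h2 ∈ G → (∀ y ∈ Φ, h1 y = h2 y) →
        h1 * x * h1⁻¹ = h2 * x * h2⁻¹ := by
      intro h1 h2 hh1 hh2 hagree
      have hc : (h2⁻¹ * h1) ∈ G := mul_mem (inv_mem hh2) hh1
      have hfix : ∀ y ∈ Φ, (h2⁻¹ * h1) y = y := by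
        intro y hy
        simp [Equiv.Perm.mul_apply, hagree y hy]
      have hcomm := hΦ _ hc hfix
      have h3 : h2 * ((h2⁻¹ * h1) * x) * h1⁻¹ = h2 * (x * (h2⁻¹ * h1)) * h1⁻¹ := by
        rw [hcomm]
      simpa [mul_assoc] using h3
    have hScount : S.Countable := by
      have hmem : ∀ p : S, ∃ h : Equiv.Perm Ω, h ∈ G ∧ h * x * h⁻¹ = ↑p := fun p => p.2
      choose F hFG hFx using hmem
      have hJ : Function.Injective (fun p : S => (fun y : ↥Φ => F p ↑y)) := by
        intro p q hpq
        apply Subtype.ext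
        rw [← hFx p, ← hFx q]
        exact key _ _ (hFG p) (hFG q) (fun y hy => congrFun hpq ⟨y, hy⟩)
      haveI : Countable ↥S := hJ.countable
      exact Set.countable_coe_iff.mp inferInstance
    refine ⟨Subgroup.closure S, ?_, ?_, stmt7_countable_closure hScount,
      Subgroup.subset_closure ⟨1, G.one_mem, by simp⟩⟩
    · refine (Subgroup.closure_le G).mpr ?_
      rintro p ⟨h, hh, rfl⟩
      exact mul_mem (mul_mem hh hxG) (inv_mem hh)
    · intro g hg n hn
      have hmap : (Subgroup.closure S).map (MulAut.conj g).toMonoidHom ≤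
          Subgroup.closure S := by
        rw [MonoidHom.map_closure]
        apply Subgroup.closure_le _ |>.mpr
        rintro p ⟨q, ⟨h, hh, rfl⟩, rfl⟩
        refine Subgroup.subset_closure ⟨g * h, mul_mem hg hh, ?_⟩
        simp [MulAut.conj_apply, mul_assoc]
      have := hmap (Subgroup.mem_map_of_mem _ hn)
      simpa [MulAut.conj_apply] using this
  · -- elements of countable normal subgroups are in the quasi-centre: Baire category
    rintro ⟨N, hNG, hnorm, hNcount, hxN⟩
    refine ⟨hNG hxN, ?_⟩
    haveI : Countable ↥(N : Set (Equiv.Perm Ω)) := hNcount.to_subtype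
    set f : ↥(N : Set (Equiv.Perm Ω)) → Set ↥(G : Set (Equiv.Perm Ω)) :=
      fun m => {h | (h : Equiv.Perm Ω) * x * (h : Equiv.Perm Ω)⁻¹ = ↑m} with hf
    have hfc : ∀ m, IsClosed (f m) := fun m =>
      (hfib x ↑m).preimage continuous_subtype_val
    have hcover : ⋃ m, f m = univ := by
      ext h
      simp only [mem_iUnion, mem_univ, iff_true]
      exact ⟨⟨_, hnorm ↑h h.2 x hxN⟩, rfl⟩
    obtain ⟨m, h₁, hh₁⟩ := nonempty_interior_of_iUnion_of_closed hfc hcover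
    have hnhds : f m ∈ 𝓝 h₁ := mem_interior_iff_mem_nhds.mp hh₁
    rw [hcomp.nhds_eq_comap] at hnhds
    obtain ⟨s, hs, hsf⟩ := Filter.mem_comap.mp hnhds
    have hs' : s ∈ 𝓝 (((((h₁ : Equiv.Perm Ω)) : Ω → Ω),
        (((h₁ : Equiv.Perm Ω)⁻¹ : Equiv.Perm Ω) : Ω → Ω)) : (Ω → Ω) × (Ω → Ω)) := hs
    rw [mem_nhds_prod_iff] at hs'
    obtain ⟨s₁, hs₁, s₂, hs₂, hss⟩ := hs'
    obtain ⟨Φ₁, hΦ₁⟩ := stmt7_nhds_pi_finset hs₁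
    obtain ⟨Φ₂, hΦ₂⟩ := stmt7_nhds_pi_finset hs₂
    refine ⟨(Φ₁ ∪ Φ₂) ∪ (Φ₁ ∪ Φ₂).image ((h₁ : Equiv.Perm Ω)⁻¹ : Equiv.Perm Ω), ?_⟩
    intro k hkG hkfix
    have hk1 : ∀ y ∈ Φ₁ ∪ Φ₂, k y = y := fun y hy =>
      hkfix y (Finset.mem_union_left _ hy)
    have hk2 : ∀ y ∈ Φ₁ ∪ Φ₂, k ((h₁ : Equiv.Perm Ω)⁻¹ y) = (h₁ : Equiv.Perm Ω)⁻¹ y :=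
      fun y hy => hkfix _ (Finset.mem_union_right _ (Finset.mem_image_of_mem _ hy))
    have hk2' : ∀ y ∈ Φ₁ ∪ Φ₂, k⁻¹ ((h₁ : Equiv.Perm Ω)⁻¹ y) = (h₁ : Equiv.Perm Ω)⁻¹ y := by
      intro y hy
      have h' : k⁻¹ (k ((h₁ : Equiv.Perm Ω)⁻¹ y)) = (h₁ : Equiv.Perm Ω)⁻¹ y :=
        Equiv.symm_apply_apply _ _
      rwa [hk2 y hy] at h'
    set h2 : Equiv.Perm Ω := (h₁ : Equiv.Perm Ω) * k with hh2def
    have hmem2 : h2 ∈ G := mul_mem h₁.2 hkG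
    have hfirst : (h2 : Ω → Ω) ∈ s₁ := by
      apply hΦ₁
      intro y hy
      have : k y = y := hk1 y (Finset.mem_union_left _ hy)
      simp [hh2def, Equiv.Perm.mul_apply, this]
    have hsecond : ((h2⁻¹ : Equiv.Perm Ω) : Ω → Ω) ∈ s₂ := by
      apply hΦ₂
      intro y hy
      have : k⁻¹ ((h₁ : Equiv.Perm Ω)⁻¹ y) = (h₁ : Equiv.Perm Ω)⁻¹ y :=
        hk2' y (Finset.mem_union_right _ hy)
      simpa [hh2def, mul_inv_rev, Equiv.Perm.mul_apply] using this
    have hin : e h2 ∈ s := hss ⟨hfirst, hsecond⟩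
    have hA : h2 * x * h2⁻¹ = ↑m := hsf hin (a := ⟨h2, hmem2⟩)
    have hB0 : h₁ ∈ f m := interior_subset hh₁
    have hB : (h₁ : Equiv.Perm Ω) * x * (h₁ : Equiv.Perm Ω)⁻¹ = ↑m := hB0
    have e1 : ((h₁ : Equiv.Perm Ω) * k) * x * ((h₁ : Equiv.Perm Ω) * k)⁻¹
        = (h₁ : Equiv.Perm Ω) * x * (h₁ : Equiv.Perm Ω)⁻¹ := by
      rw [← hh2def, hA, hB]
    have e2 : k * x * k⁻¹ = x := by
      have h3 := congrArg (fun w => (h₁ : Equiv.Perm Ω)⁻¹ * w * (h₁ : Equiv.Perm Ω)) e1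
      simpa [mul_assoc, mul_inv_rev] using h3
    have h4 := congrArg (fun w => w * k) e2
    simpa [mul_assoc] using h4
end

section
/- Let Γ be a connected locally finite graph and H ≤ Aut(Γ) a subgroup with finitely many orbits on the vertex set VΓ. Then the centraliser C_{Aut(Γ)}(H) has all point stabilisers finite. -/
/-- The automorphism group of a simple graph `Γ`, as a subgroup of `Sym(V)`. -/
def autSub {V : Type*} (Γ : SimpleGraph V) : Subgroup (Equiv.Perm V) where
  carrier := {g | ∀ a b : V, Γ.Adj (g a) (g b) ↔ Γ.Adj a b}
  one_mem' := by intro a b; simp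
  mul_mem' := by
    intro x y hx hy a b
    simpa [Equiv.Perm.mul_apply] using (hx (y a) (y b)).trans (hy a b)
  inv_mem' := by
    intro g hg a b
    rw [← hg (g⁻¹ a) (g⁻¹ b)]
    simp

/-- vertices admitting a walk to `v` of length ≤ n -/
lemma ball_finite {V : Type*} (Γ : SimpleGraph V)
    (hlf : ∀ v : V, (Γ.neighborSet v).Finite) (v : V) :
    ∀ n : ℕ, {u : V | ∃ w : Γ.Walk u v, w.length ≤ n}.Finite := by
  intro n
  induction n with
  | zero =>
    apply Set.Finite.subset (Set.finite_singleton v)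
    rintro u ⟨w, hw⟩
    rw [Nat.le_zero] at hw
    exact (SimpleGraph.Walk.eq_of_length_eq_zero hw)
  | succ n ih =>
    apply Set.Finite.subset (ih.union (Set.Finite.biUnion ih (fun x _ => hlf x)))
    rintro u ⟨w, hw⟩
    cases w with
    | nil => exact Or.inl ⟨SimpleGraph.Walk.nil, Nat.zero_le n⟩
    | cons h w' =>
      simp only [SimpleGraph.Walk.length_cons, Nat.succ_le_succ_iff] at hw
      exact Or.inr (Set.mem_biUnion ⟨w', hw⟩ h.symm)

lemma aut_dist_eq {V : Type*} (Γ : SimpleGraph V) (hconn : Γ.Connected)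
    (g : Equiv.Perm V) (hg : g ∈ autSub Γ) (a b : V) :
    Γ.dist (g a) (g b) = Γ.dist a b := by
  have key : ∀ (g : Equiv.Perm V), g ∈ autSub Γ → ∀ a b : V,
      Γ.dist (g a) (g b) ≤ Γ.dist a b := by
    intro g hg a b
    obtain ⟨w, hw⟩ := hconn.exists_walk_length_eq_dist a b
    have : Γ.dist (g a) (g b) ≤ (w.map ⟨g, fun {x y} h => (hg x y).2 h⟩).length :=
      SimpleGraph.dist_le _
    rwa [SimpleGraph.Walk.length_map, hw] at this
  refine le_antisymm (key g hg a b) ?_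
  have := key g⁻¹ ((autSub Γ).inv_mem hg) (g a) (g b)
  simpa using this

/-- Let `Γ` be a connected locally finite graph and `H ≤ Aut(Γ)` with finitely many
orbits on the vertex set.  Then the centraliser `C_{Aut(Γ)}(H)` has all point
stabilisers finite. -/
theorem stmt9 {V : Type*} (Γ : SimpleGraph V) (hconn : Γ.Connected)
    (hlf : ∀ v : V, (Γ.neighborSet v).Finite)
    (H : Subgroup (Equiv.Perm V)) (hH : H ≤ autSub Γ)
    (horb : ∃ S : Finset V, ∀ v : V, ∃ s ∈ S, ∃ h ∈ H, h s = v) :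
    ∀ v : V,
      {g : Equiv.Perm V | g ∈ autSub Γ ∧ (∀ h ∈ H, g * h = h * g) ∧ g v = v}.Finite := by
  obtain ⟨S, hS⟩ := horb
  intro v
  apply Set.Finite.of_finite_image (f := fun (g : Equiv.Perm V) (s : S) => g s)
  · refine Set.Finite.subset (Set.Finite.pi (t := fun s : S =>
      {u : V | ∃ w : Γ.Walk u v, w.length ≤ Γ.dist s v})
      (fun s => ball_finite Γ hlf v _)) ?_
    rintro _ ⟨g, ⟨hg, hcomm, hgv⟩, rfl⟩
    refine Set.mem_univ_pi.2 fun s => ?_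
    have hd : Γ.dist (g s) v = Γ.dist s v := by
      conv_lhs => rw [← hgv]
      exact aut_dist_eq Γ hconn g hg s v
    obtain ⟨w, hw⟩ := hconn.exists_walk_length_eq_dist (g (s : V)) v
    exact ⟨w, by rw [hw, hd]⟩
  · rintro g1 ⟨hg1, hc1, _⟩ g2 ⟨hg2, hc2, _⟩ heq
    ext u
    obtain ⟨s, hs, h, hh, rfl⟩ := hS u
    have e1 : g1 (h s) = h (g1 s) := by
      have := congr_arg (fun p : Equiv.Perm V => p s) (hc1 h hh)
      simpa [Equiv.Perm.mul_apply] using this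
    have e2 : g2 (h s) = h (g2 s) := by
      have := congr_arg (fun p : Equiv.Perm V => p s) (hc2 h hh)
      simpa [Equiv.Perm.mul_apply] using this
    have es : g1 s = g2 s := congr_fun heq ⟨s, hs⟩
    rw [e1, e2, es]
end

section
/- Let Γ be a connected locally finite graph, and let H, G ≤ Aut(Γ) with H having finitely many orbits on VΓ. If the commutator subgroup [H, G] has all point stabilisers finite, then G has all point stabilisers finite. -/
namespace Stmt11Aux

open SimpleGraph
open scoped commutatorElement

variable {V : Type*} {Γ : SimpleGraph V}

lemma aut_dist (hconn : Γ.Connected) {g : Equiv.Perm V} (hg : g ∈ autSub Γ) (a b : V) :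
    Γ.dist (g a) (g b) = Γ.dist a b := by
  have key : ∀ (p : Equiv.Perm V), p ∈ autSub Γ → ∀ a b : V,
      Γ.dist (p a) (p b) ≤ Γ.dist a b := by
    intro p hp a b
    obtain ⟨q, hq⟩ := hconn.exists_walk_length_eq_dist a b
    let iso : Γ ≃g Γ := ⟨p, hp _ _⟩
    have := SimpleGraph.dist_le (q.map iso.toHom)
    rw [SimpleGraph.Walk.length_map, hq] at this
    exact this
  refine le_antisymm (key g hg a b) ?_
  have := key g⁻¹ (inv_mem hg) (g a) (g b)
  simpa using this

lemma exists_adj_dist (hconn : Γ.Connected) {v w : V} {n : ℕ} (h : Γ.dist v w = n + 1) :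
    ∃ u, Γ.Adj u w ∧ Γ.dist v u = n := by
  have hne : w ≠ v := by
    rintro rfl
    simp [SimpleGraph.dist_self] at h
  obtain ⟨p, hp⟩ := hconn.exists_walk_length_eq_dist v w
  obtain ⟨u, hadj, q, hq⟩ := SimpleGraph.Walk.exists_eq_cons_of_ne hne p.reverse
  have hlen : q.length = n := by
    have := SimpleGraph.Walk.length_reverse p
    rw [hq] at this
    simp [hp, h] at this
    omega
  have h1 : Γ.dist v u ≤ n := by
    have := SimpleGraph.dist_le q.reverse
    simpa [SimpleGraph.Walk.length_reverse, hlen] using this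
  have h2 : Γ.dist u w ≤ 1 := by
    have := SimpleGraph.dist_le hadj.symm.toWalk
    simpa using this
  have h3 : Γ.dist v w ≤ Γ.dist v u + Γ.dist u w := hconn.dist_triangle
  refine ⟨u, hadj.symm, ?_⟩
  omega

lemma ball_finite (hconn : Γ.Connected) (hlf : ∀ v : V, (Γ.neighborSet v).Finite)
    (v : V) (n : ℕ) : {w : V | Γ.dist v w ≤ n}.Finite := by
  induction n with
  | zero =>
    refine Set.Finite.subset (Set.finite_singleton v) ?_
    intro w hw
    simp only [Set.mem_setOf_eq, Nat.le_zero] at hw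
    simp [(hconn.dist_eq_zero_iff.mp hw).symm]
  | succ n IH =>
    have hsub : {w : V | Γ.dist v w ≤ n + 1} ⊆
        {w : V | Γ.dist v w ≤ n} ∪ ⋃ u ∈ {w : V | Γ.dist v w ≤ n}, Γ.neighborSet u := by
      intro w hw
      simp only [Set.mem_setOf_eq] at hw
      rcases Nat.lt_or_ge (Γ.dist v w) (n + 1) with hlt | hge
      · exact Or.inl (Nat.lt_succ_iff.mp hlt)
      · have heq : Γ.dist v w = n + 1 := le_antisymm hw hge
        obtain ⟨u, hadj, hdu⟩ := exists_adj_dist hconn heq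
        refine Or.inr ?_
        exact Set.mem_biUnion (by simp [hdu]) hadj
    exact Set.Finite.subset (IH.union (IH.biUnion (fun u _ => hlf u))) hsub

lemma conjN {H G : Subgroup (Equiv.Perm V)} {h : Equiv.Perm V} (hh : h ∈ H) :
    ∀ x ∈ ⁅H, G⁆, h * x * h⁻¹ ∈ ⁅H, G⁆ := by
  intro x hx
  rw [Subgroup.commutator_def] at hx
  induction hx using Subgroup.closure_induction with
  | mem y hy =>
    obtain ⟨h', hh', g', hg', rfl⟩ := hy
    have hid : h * ⁅h', g'⁆ * h⁻¹ = ⁅h * h', g'⁆ * ⁅h, g'⁆⁻¹ := by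
      simp only [commutatorElement_def]; group
    rw [hid]
    exact mul_mem (Subgroup.commutator_mem_commutator (mul_mem hh hh') hg')
      (inv_mem (Subgroup.commutator_mem_commutator hh hg'))
  | one => simpa using one_mem _
  | mul a b _ _ iha ihb =>
    have hid : h * (a * b) * h⁻¹ = (h * a * h⁻¹) * (h * b * h⁻¹) := by group
    rw [hid]; exact mul_mem iha ihb
  | inv a _ iha =>
    have hid : h * a⁻¹ * h⁻¹ = (h * a * h⁻¹)⁻¹ := by group
    rw [hid]; exact inv_mem iha

lemma rigid {N : Subgroup (Equiv.Perm V)} (s : V)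
    (hfin : {g : Equiv.Perm V | g ∈ N ∧ g s = s}.Finite) :
    ∃ n : ℕ, ∀ x : Equiv.Perm V, x ∈ N → (∀ w, Γ.dist s w ≤ n → x w = w) → x = 1 := by
  classical
  set T := hfin.toFinset with hT
  set A : ℕ → Finset (Equiv.Perm V) :=
    fun n => T.filter (fun x => ∀ w, Γ.dist s w ≤ n → x w = w) with hA
  have hanti : ∀ m n : ℕ, m ≤ n → A n ⊆ A m := by
    intro m n hmn x hx
    simp only [hA, Finset.mem_filter] at hx ⊢
    exact ⟨hx.1, fun w hw => hx.2 w (le_trans hw hmn)⟩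
  set f : ℕ → ℕ := fun n => (A n).card with hf
  have hmem : sInf (Set.range f) ∈ Set.range f := Nat.sInf_mem ⟨f 0, 0, rfl⟩
  obtain ⟨n0, hn0⟩ := hmem
  refine ⟨n0, ?_⟩
  intro x hxN hxfix
  have hxA : x ∈ A n0 := by
    simp only [hA, Finset.mem_filter, hT, Set.Finite.mem_toFinset, Set.mem_setOf_eq]
    exact ⟨⟨hxN, hxfix s (by simp [SimpleGraph.dist_self])⟩, hxfix⟩
  have key : ∀ w : V, x w = w := by
    intro w
    set m := max n0 (Γ.dist s w) with hm
    have hsub : A m ⊆ A n0 := hanti n0 m (le_max_left _ _)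
    have hcard : (A n0).card ≤ (A m).card := by
      have h1 : sInf (Set.range f) ≤ f m := Nat.sInf_le ⟨m, rfl⟩
      calc (A n0).card = f n0 := rfl
        _ = sInf (Set.range f) := hn0
        _ ≤ f m := h1
        _ = (A m).card := rfl
    have heq : A m = A n0 := Finset.eq_of_subset_of_card_le hsub hcard
    have hxm : x ∈ A m := heq ▸ hxA
    simp only [hA, Finset.mem_filter] at hxm
    exact hxm.2 w (le_max_right _ _)
  exact Equiv.ext key

end Stmt11Aux

open Stmt11Aux
open scoped commutatorElement

/-- Let `Γ` be a connected locally finite graph and `H, G ≤ Aut(Γ)` with `H` having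
finitely many orbits on `VΓ`.  If the commutator subgroup `[H, G]` has all point
stabilisers finite, then `G` has all point stabilisers finite. -/
theorem stmt11 {V : Type*} (Γ : SimpleGraph V) (hconn : Γ.Connected)
    (hlf : ∀ v : V, (Γ.neighborSet v).Finite)
    (H G : Subgroup (Equiv.Perm V)) (hH : H ≤ autSub Γ) (hG : G ≤ autSub Γ)
    (horb : ∃ S : Finset V, ∀ v : V, ∃ s ∈ S, ∃ h ∈ H, h s = v)
    (hcomm : ∀ v : V, {g : Equiv.Perm V | g ∈ ⁅H, G⁆ ∧ g v = v}.Finite) :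
    ∀ v : V, {g : Equiv.Perm V | g ∈ G ∧ g v = v}.Finite := by
  classical
  obtain ⟨S, hS⟩ := horb
  intro v
  -- distance preservation for members of H and G
  have hdH : ∀ h : Equiv.Perm V, h ∈ H → ∀ a b : V, Γ.dist (h a) (h b) = Γ.dist a b :=
    fun h hh a b => aut_dist hconn (hH hh) a b
  -- rigidity radii
  have hrig : ∀ s : V, ∃ n : ℕ, ∀ x : Equiv.Perm V, x ∈ ⁅H, G⁆ →
      (∀ w, Γ.dist s w ≤ n → x w = w) → x = 1 :=
    fun s => rigid (Γ := Γ) s (hcomm s)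
  choose ns hns using hrig
  set L := S.sup ns with hL
  set R₁ := S.sup (fun s => Γ.dist s v) with hR
  set M := L + 2 * R₁ + 1 with hM
  -- uniform rigidity
  have urigid : ∀ x : V, ∀ c : Equiv.Perm V, c ∈ ⁅H, G⁆ →
      (∀ w, Γ.dist x w ≤ L → c w = w) → c = 1 := by
    intro x c hc hfix
    obtain ⟨s, hsS, h, hh, hhs⟩ := hS x
    have hd : h⁻¹ * c * h ∈ ⁅H, G⁆ := by
      have := conjN (inv_mem hh) c hc
      simpa using this
    have hfix' : ∀ w, Γ.dist s w ≤ ns s → (h⁻¹ * c * h) w = w := by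
      intro w hw
      have hxw : Γ.dist x (h w) ≤ L := by
        rw [← hhs, hdH h hh]
        exact le_trans hw (Finset.le_sup (f := ns) hsS)
      have := hfix (h w) hxw
      simp [Equiv.Perm.mul_apply, this]
    have h1 : h⁻¹ * c * h = 1 := hns s _ hd hfix'
    have : c = h * 1 * h⁻¹ := by
      rw [← h1]; group
    simpa using this
  -- density of the orbit Hv
  have dens : ∀ w : V, ∃ h : Equiv.Perm V, h ∈ H ∧ Γ.dist (h v) w ≤ R₁ := by
    intro w
    obtain ⟨s, hsS, h, hh, hhs⟩ := hS w
    refine ⟨h, hh, ?_⟩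
    rw [← hhs, hdH h hh]
    rw [SimpleGraph.dist_comm]
    exact Finset.le_sup (f := fun s => Γ.dist s v) hsS
  -- key triviality lemma
  have key : ∀ g : Equiv.Perm V, g ∈ G → (∀ w, Γ.dist v w ≤ M → g w = w) → g = 1 := by
    intro g hgG hfix
    -- the propagation step
    have step : ∀ (y : V) (h1 : Equiv.Perm V), h1 ∈ H → Γ.dist y (h1 y) ≤ 2 * R₁ + 1 →
        (∀ w, Γ.dist y w ≤ M → g w = w) → (∀ w, Γ.dist (h1 y) w ≤ M → g w = w) := by
      intro y h1 hh1 hdy hQ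
      set c := g⁻¹ * h1 * g * h1⁻¹ with hc
      have hcN : c ∈ ⁅H, G⁆ := by
        have hmem : (⁅g⁻¹, h1⁆ : Equiv.Perm V) ∈ ⁅G, H⁆ :=
          Subgroup.commutator_mem_commutator (inv_mem hgG) hh1
        rw [Subgroup.commutator_comm] at hmem
        have hcc : (⁅g⁻¹, h1⁆ : Equiv.Perm V) = c := by
          simp only [commutatorElement_def, hc, inv_inv]
        rwa [hcc] at hmem
      have agree : ∀ z : V, g z = z → c (h1 z) = g⁻¹ (h1 z) := by
        intro z hz
        simp [hc, Equiv.Perm.mul_apply, hz]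
      have hdinv : ∀ w : V, Γ.dist y (h1⁻¹ w) = Γ.dist (h1 y) w := by
        intro w
        conv_rhs => rw [show w = h1 (h1⁻¹ w) by simp]
        rw [hdH h1 hh1]
      have hfixL : ∀ w, Γ.dist (h1 y) w ≤ L → c w = w := by
        intro w hw
        have hz : g (h1⁻¹ w) = h1⁻¹ w := by
          apply hQ
          rw [hdinv w]
          exact le_trans hw (by omega)
        have h2 : c w = g⁻¹ w := by
          have := agree (h1⁻¹ w) hz
          simpa using this
        have hgw : g w = w := by
          apply hQ
          have := hconn.dist_triangle (u := y) (v := h1 y) (w := w)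
          omega
        rw [h2]
        conv_lhs => rw [← hgw]
        simp
      have hc1 : c = 1 := urigid (h1 y) c hcN hfixL
      intro w hw
      have hz : g (h1⁻¹ w) = h1⁻¹ w := by
        apply hQ
        rw [hdinv w]
        exact hw
      have h2 : c w = g⁻¹ w := by
        have := agree (h1⁻¹ w) hz
        simpa using this
      rw [hc1] at h2
      simp only [Equiv.Perm.one_apply] at h2
      have : g w = g (g⁻¹ w) := by rw [← h2]
      simpa using this
    -- propagation along the orbit, by induction on distance from v
    have main : ∀ n : ℕ, ∀ w : V, Γ.dist v w = n →
        ∀ a : Equiv.Perm V, a ∈ H → Γ.dist (a v) w ≤ R₁ →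
        (∀ u, Γ.dist (a v) u ≤ M → g u = u) := by
      intro n
      induction n with
      | zero =>
        intro w hw a ha hnear
        have hwv : v = w := hconn.dist_eq_zero_iff.mp hw
        have hdva : Γ.dist v (a v) ≤ 2 * R₁ + 1 := by
          rw [SimpleGraph.dist_comm]
          rw [← hwv] at hnear
          omega
        exact step v a ha hdva hfix
      | succ m IH =>
        intro w hw a ha hnear
        obtain ⟨u, hadj, hdu⟩ := exists_adj_dist hconn hw
        obtain ⟨b, hb, hbu⟩ := dens u
        have hQb := IH u hdu b hb hbu
        have h1H : a * b⁻¹ ∈ H := mul_mem ha (inv_mem hb)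
        have hyy : (a * b⁻¹) (b v) = a v := by
          simp [Equiv.Perm.mul_apply]
        have hdist : Γ.dist (b v) ((a * b⁻¹) (b v)) ≤ 2 * R₁ + 1 := by
          rw [hyy]
          have t1 : Γ.dist (b v) (a v) ≤ Γ.dist (b v) u + Γ.dist u (a v) :=
            hconn.dist_triangle
          have t2 : Γ.dist u (a v) ≤ Γ.dist u w + Γ.dist w (a v) :=
            hconn.dist_triangle
          have t3 : Γ.dist u w ≤ 1 := by
            have := SimpleGraph.dist_le hadj.toWalk
            simpa using this
          have t4 : Γ.dist w (a v) ≤ R₁ := by rw [SimpleGraph.dist_comm]; exact hnear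
          omega
        have := step (b v) (a * b⁻¹) h1H hdist hQb
        rwa [hyy] at this
    -- conclude g = 1
    apply Equiv.ext
    intro w
    obtain ⟨h, hh, hhw⟩ := dens w
    have hQ := main (Γ.dist v w) w rfl h hh hhw
    have := hQ w (le_trans hhw (by omega))
    simpa using this
  -- finiteness of the stabiliser via restriction to the ball
  have hball : {w : V | Γ.dist v w ≤ M}.Finite := ball_finite hconn hlf v M
  set B := hball.toFinset with hB
  set F : Equiv.Perm V → (B → V) := fun g => fun b => g b with hF
  have himg : (F '' {g : Equiv.Perm V | g ∈ G ∧ g v = v}).Finite := by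
    have hpi : {f : B → V | ∀ b : B, f b ∈ {w : V | Γ.dist v w ≤ M}}.Finite :=
      Set.Finite.pi' (fun _ => hball)
    refine Set.Finite.subset hpi ?_
    rintro f ⟨g, ⟨hgG, hgv⟩, rfl⟩
    intro b
    have hb : Γ.dist v (b : V) ≤ M := hball.mem_toFinset.mp b.2
    have : Γ.dist v (g b) = Γ.dist v (b : V) := by
      conv_lhs => rw [← hgv]
      exact aut_dist hconn (hG hgG) v b
    simp only [Set.mem_setOf_eq, hF]
    rw [this]
    exact hb
  have hinj : Set.InjOn F {g : Equiv.Perm V | g ∈ G ∧ g v = v} := by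
    rintro g1 ⟨hg1, hg1v⟩ g2 ⟨hg2, hg2v⟩ hFeq
    have hfixball : ∀ w, Γ.dist v w ≤ M → (g2⁻¹ * g1) w = w := by
      intro w hw
      have hwB : w ∈ B := by rw [hB, Set.Finite.mem_toFinset]; exact hw
      have := congrFun hFeq ⟨w, hwB⟩
      simp only [hF] at this
      simp [Equiv.Perm.mul_apply, this]
    have := key (g2⁻¹ * g1) (mul_mem (inv_mem hg2) hg1) hfixball
    have h21 : g1 = g2 := by
      have := congrArg (fun p => g2 * p) this
      simpa [mul_assoc] using this
    exact h21
  exact Set.Finite.of_finite_image himg hinj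
end

section
/- Let K₁, …, K_m be pairwise commuting subgroups of a group G (i.e., elements of K_i and K_j commute for i ≠ j) with K_i ∩ K_j trivial for i ≠ j, and suppose each K_i has trivial centre Z(K_i) = 1. Then the subgroup M = ⟨K₁, …, K_m⟩ is the internal direct product K₁ × ⋯ × K_m. -/
/-- Let `K₁, …, K_m` be pairwise commuting subgroups of a group `G` with pairwise
trivial intersections and trivial centres.  Then `M = ⟨K₁, …, K_m⟩` is the internal
direct product `K₁ × ⋯ × K_m`: the multiplication map `K₁ × ⋯ × K_m → G` is injective
with range `⟨K₁, …, K_m⟩ = ⨆ i, K i`. -/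
theorem stmt18 {G : Type*} [Group G] {m : ℕ} (K : Fin m → Subgroup G)
    (hcomm : Pairwise fun i j => ∀ x y : G, x ∈ K i → y ∈ K j → Commute x y)
    (hdisj : ∀ i j : Fin m, i ≠ j → K i ⊓ K j = ⊥)
    (hcentre : ∀ i : Fin m, ∀ x ∈ K i, (∀ y ∈ K i, Commute x y) → x = 1) :
    Function.Injective (Subgroup.noncommPiCoprod hcomm) ∧
      (Subgroup.noncommPiCoprod hcomm).range = ⨆ i, K i := by
  refine ⟨Subgroup.injective_noncommPiCoprod_of_iSupIndep ?_, Subgroup.noncommPiCoprod_range⟩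
  intro j
  rw [disjoint_iff, eq_bot_iff]
  intro x hx
  rw [Subgroup.mem_inf] at hx
  have hsup : (⨆ i ≠ j, K i) ≤ Subgroup.centralizer (K j) := by
    refine iSup_le fun i => iSup_le fun hij => fun y hy =>
      Subgroup.mem_centralizer_iff.mpr fun z hz => ?_
    exact ((hcomm hij) y z hy hz).symm
  have hx2 : x ∈ ⨆ i ≠ j, K i := by
    have := hx.2
    simpa [iSup_subtype'] using this
  have hc : ∀ y ∈ K j, Commute x y := fun y hy => ((hsup hx2) y hy).symm
  simp [hcentre j x hx.1 hc, Subgroup.mem_bot]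
end
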